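/- Let G be a finite subgroup of SO(3). Then the set of points of the unit sphere S² ⊂ ℝ³ having nontrivial stabilizer in G, namely { x : ‖x‖ = 1 and ∃ g ∈ G, g ≠ 1 ∧ g • x = x }, is finite. -/

import Mathlib

/-! A rotation `g ≠ 1` cannot fix two linearly independent vectors `x, y`: it would also fix
`x ⨯₃ y`, hence a basis. So the unit vectors fixed by `g` are at most `±u` for one `u`, and the
set in question is a union of such sets over the finitely many `g ∈ G \ {1}`. -/

set_option synthInstance.maxHeartbeats 1000000

/-- `SO(3)`: the group of real orthogonal `3×3` matrices of determinant `1`,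
realized as a subgroup of the orthogonal group `O(3)`. -/
def SO3 : Subgroup (Matrix.orthogonalGroup (Fin 3) ℝ) where
  carrier := {A | ((A : Matrix (Fin 3) (Fin 3) ℝ)).det = 1}
  one_mem' := by simp
  mul_mem' := by
    intro a b ha hb
    simp only [Set.mem_setOf_eq, Matrix.UnitaryGroup.mul_val, Matrix.det_mul] at *
    rw [ha, hb, mul_one]
  inv_mem' := by
    intro a ha
    simp only [Set.mem_setOf_eq, Matrix.UnitaryGroup.inv_val, Matrix.star_eq_conjTranspose,
      Matrix.det_conjTranspose, star_trivial] at *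
    exact ha

/-- The orthogonal group `O(3)` acts on `ℝ³` by matrix–vector multiplication. -/
noncomputable instance : MulAction (Matrix.orthogonalGroup (Fin 3) ℝ) (EuclideanSpace ℝ (Fin 3)) where
  smul A v := WithLp.toLp 2 (Matrix.mulVec (A : Matrix (Fin 3) (Fin 3) ℝ) v)
  one_smul v := by
    change WithLp.toLp 2 (Matrix.mulVec ((1 : Matrix.orthogonalGroup (Fin 3) ℝ) :
      Matrix (Fin 3) (Fin 3) ℝ) v) = v
    simp
  mul_smul A B v := by
    change WithLp.toLp 2 (Matrix.mulVec ((A * B : Matrix.orthogonalGroup (Fin 3) ℝ) :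
      Matrix (Fin 3) (Fin 3) ℝ) v) = WithLp.toLp 2 (Matrix.mulVec (A : Matrix (Fin 3) (Fin 3) ℝ)
      (WithLp.toLp 2 (Matrix.mulVec (B : Matrix (Fin 3) (Fin 3) ℝ) v)))
    simp [Matrix.mulVec_mulVec]

namespace Matrix

theorem transpose_mulVec_cross_mulVec {R : Type*} [CommRing R] (A : Matrix (Fin 3) (Fin 3) R)
    (x y : Fin 3 → R) : Aᵀ *ᵥ ((A *ᵥ x) ⨯₃ (A *ᵥ y)) = A.det • (x ⨯₃ y) := by
  ext i
  fin_cases i <;>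
    simp [cross_apply, mulVec, dotProduct, Fin.sum_univ_three, det_fin_three] <;> ring

theorem det_vec3_cross {R : Type*} [CommRing R] (x y : Fin 3 → R) :
    det ![x, y, x ⨯₃ y] = (x ⨯₃ y) ⬝ᵥ (x ⨯₃ y) := by
  rw [← triple_product_eq_det, triple_product_permutation, triple_product_permutation]

theorem eq_one_of_mulVec_eq_self_of_isUnit_det {R : Type*} [CommRing R] {n : Type*} [Fintype n]
    [DecidableEq n] {A : Matrix n n R} {v : n → n → R} (hv : IsUnit (of v).det)
    (hfix : ∀ i, A *ᵥ v i = v i) : A = 1 := by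
  have hB : IsUnit (of v)ᵀ := (isUnit_iff_isUnit_det _).mpr (by rwa [det_transpose])
  refine hB.mul_right_cancel ?_
  rw [one_mul]
  ext i j
  simpa [mul_apply, mulVec, dotProduct] using congrFun (hfix j) i

theorem eq_one_of_mulVec_eq_self_of_linearIndependent {K : Type*} [Field K] [LinearOrder K]
    [IsStrictOrderedRing K] {A : Matrix (Fin 3) (Fin 3) K} (hA : A * Aᵀ = 1) (hdet : A.det = 1)
    {x y : Fin 3 → K} (hxy : LinearIndependent K ![x, y]) (hx : A *ᵥ x = x) (hy : A *ᵥ y = y) :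
    A = 1 := by
  have hz : A *ᵥ (x ⨯₃ y) = x ⨯₃ y := by
    have h : Aᵀ *ᵥ (x ⨯₃ y) = x ⨯₃ y := by
      simpa [hx, hy, hdet] using transpose_mulVec_cross_mulVec A x y
    conv_lhs => rw [← h, mulVec_mulVec, hA, one_mulVec]
  have hbasis : IsUnit (of ![x, y, x ⨯₃ y]).det := by
    refine isUnit_iff_ne_zero.mpr ?_
    change det ![x, y, x ⨯₃ y] ≠ 0
    rw [det_vec3_cross]
    exact fun h =>
      crossProduct_ne_zero_iff_linearIndependent.mpr hxy (dotProduct_self_eq_zero.mp h)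
  refine eq_one_of_mulVec_eq_self_of_isUnit_det hbasis fun i => ?_
  fin_cases i <;> simp [hx, hy, hz]

end Matrix

theorem eq_or_eq_neg_of_not_linearIndependent {E : Type*} [NormedAddCommGroup E] [NormedSpace ℝ E]
    {x y : E} (hx : ‖x‖ = 1) (hy : ‖y‖ = 1) (hxy : ¬LinearIndependent ℝ ![x, y]) :
    y = x ∨ y = -x := by
  have hx0 : x ≠ 0 := norm_ne_zero_iff.mp (by simp [hx])
  obtain ⟨a, rfl⟩ : ∃ a : ℝ, a • x = y := by simpa [LinearIndependent.pair_iff' hx0] using hxy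
  have ha : |a| = 1 := by simpa [norm_smul, hx] using hy
  rcases (abs_eq zero_le_one).mp ha with rfl | rfl <;> simp

theorem Set.finite_of_forall_eq_or_eq_neg {α : Type*} [Neg α] {s : Set α}
    (h : ∀ x ∈ s, ∀ y ∈ s, y = x ∨ y = -x) : s.Finite := by
  rcases s.eq_empty_or_nonempty with rfl | ⟨x, hx⟩
  · exact Set.finite_empty
  · exact (Set.toFinite {x, -x}).subset fun y hy => h x hx y hy

theorem SO3.eq_one_of_smul_eq_self {g : SO3} {x y : EuclideanSpace ℝ (Fin 3)}
    (hxy : LinearIndependent ℝ ![x, y]) (hx : g • x = x) (hy : g • y = y) : g = 1 := by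
  have hxy' : LinearIndependent ℝ ![x.ofLp, y.ofLp] := by
    rw [LinearIndependent.pair_iff] at hxy ⊢
    exact fun s t hst => hxy s t (by simpa using congrArg (WithLp.toLp 2) hst)
  exact Subtype.ext <| Subtype.ext <| Matrix.eq_one_of_mulVec_eq_self_of_linearIndependent
    ((Matrix.mem_orthogonalGroup_iff _ _).mp g.1.2) g.2 hxy' (congrArg WithLp.ofLp hx)
    (congrArg WithLp.ofLp hy)

theorem SO3.eq_or_eq_neg_of_smul_eq_self {g : SO3} (hg : g ≠ 1) {x y : EuclideanSpace ℝ (Fin 3)}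
    (hx : ‖x‖ = 1) (hy : ‖y‖ = 1) (hgx : g • x = x) (hgy : g • y = y) : y = x ∨ y = -x :=
  eq_or_eq_neg_of_not_linearIndependent hx hy fun hxy => hg (eq_one_of_smul_eq_self hxy hgx hgy)

/-- For a finite subgroup `G` of `SO(3)`, the set of points of the unit sphere `S² ⊂ ℝ³`
whose stabilizer in `G` is nontrivial is finite. -/
theorem finite_subgroup_SO3_nontrivial_stabilizer_points_finite
    (G : Subgroup SO3) [Finite G] :
    {x : EuclideanSpace ℝ (Fin 3) | ‖x‖ = 1 ∧
      ∃ g ∈ G, g ≠ 1 ∧ g • x = x}.Finite := by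
  have hfix (g : SO3) (hg : g ≠ 1) :
      {x : EuclideanSpace ℝ (Fin 3) | ‖x‖ = 1 ∧ g • x = x}.Finite :=
    Set.finite_of_forall_eq_or_eq_neg fun x ⟨hx, hgx⟩ y ⟨hy, hgy⟩ =>
      SO3.eq_or_eq_neg_of_smul_eq_self hg hx hy hgx hgy
  refine (((G : Set SO3).toFinite.sdiff).biUnion fun g hg => hfix g hg.2).subset ?_
  rintro x ⟨hx, g, hgG, hg1, hgx⟩
  exact Set.mem_biUnion ⟨hgG, hg1⟩ ⟨hx, hgx⟩
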